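/- arXiv:1412.8400 — 6 statements merged into one kernel-verified Lean document; each statement's English description precedes it below -/
import Mathlib

section
/- Let X be a finite set, q a natural number, and let V be a family of q-element subsets of X, where two sets A, B in V are adjacent iff |A △ B| = 2. If A and B are adjacent and C ∈ V is a common neighbor of A and B, then either (A ∩ B ⊆ C and C ∩ (A △ B) = ∅) or (A △ B ⊆ C and C ⊆ A ∪ B). -/
lemma sd_split {α : Type*} [DecidableEq α] (S T : Finset α)
    (h : S.card = T.card) (h2 : (symmDiff S T).card = 2) :
    (S \ T).card = 1 ∧ (T \ S).card = 1 := by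
  have hdef : symmDiff S T = (S \ T) ∪ (T \ S) := by
    ext x; simp [Finset.mem_symmDiff, Finset.mem_sdiff, or_comm]
  have hdisj : Disjoint (S \ T) (T \ S) := disjoint_sdiff_sdiff
  have hcard : (S \ T).card + (T \ S).card = 2 := by
    rw [hdef, Finset.card_union_of_disjoint hdisj] at h2; exact h2
  have h1 : (S \ T).card + (S ∩ T).card = S.card := Finset.card_sdiff_add_card_inter S T
  have h3 : (T \ S).card + (T ∩ S).card = T.card := Finset.card_sdiff_add_card_inter T S
  have hint : (S ∩ T).card = (T ∩ S).card := by rw [Finset.inter_comm]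
  omega

theorem stmt_0 {α : Type*} [DecidableEq α] (X : Finset α) (q : ℕ)
    (V : Finset (Finset α))
    (hV : ∀ A ∈ V, A ⊆ X ∧ A.card = q)
    (A B C : Finset α) (hA : A ∈ V) (hB : B ∈ V) (hC : C ∈ V)
    (hAB : (symmDiff A B).card = 2)
    (hCA : C ≠ A) (hCB : C ≠ B)
    (hCAadj : (symmDiff C A).card = 2) (hCBadj : (symmDiff C B).card = 2) :
    (A ∩ B ⊆ C ∧ C ∩ symmDiff A B = ∅) ∨
    (symmDiff A B ⊆ C ∧ C ⊆ A ∪ B) := by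
  have hAq := (hV A hA).2
  have hBq := (hV B hB).2
  have hCq := (hV C hC).2
  have hABc : A.card = B.card := by rw [hAq, hBq]
  have hCAc : C.card = A.card := by rw [hCq, hAq]
  have hCBc : C.card = B.card := by rw [hCq, hBq]
  obtain ⟨hAB1, hBA1⟩ := sd_split A B hABc hAB
  obtain ⟨hCA1, hAC1⟩ := sd_split C A hCAc hCAadj
  obtain ⟨hCB1, hBC1⟩ := sd_split C B hCBc hCBadj
  obtain ⟨a, hab⟩ := Finset.card_eq_one.mp hAB1
  obtain ⟨b, hba⟩ := Finset.card_eq_one.mp hBA1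
  have haA : a ∈ A ∧ a ∉ B := Finset.mem_sdiff.mp (hab ▸ Finset.mem_singleton_self a)
  have hbB : b ∈ B ∧ b ∉ A := Finset.mem_sdiff.mp (hba ▸ Finset.mem_singleton_self b)
  have hsdAB : ∀ x, x ∈ symmDiff A B → x = a ∨ x = b := by
    intro x hx
    rw [Finset.mem_symmDiff] at hx
    rcases hx with ⟨h1, h2⟩ | ⟨h1, h2⟩
    · left
      have : x ∈ A \ B := Finset.mem_sdiff.mpr ⟨h1, h2⟩
      rw [hab] at this; exact Finset.mem_singleton.mp this
    · right
      have : x ∈ B \ A := Finset.mem_sdiff.mpr ⟨h1, h2⟩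
      rw [hba] at this; exact Finset.mem_singleton.mp this
  by_cases haC : a ∈ C <;> by_cases hbC : b ∈ C
  · -- both in C : right case
    right
    constructor
    · intro x hx
      rcases hsdAB x hx with rfl | rfl <;> assumption
    · intro z hz
      by_contra hzAB
      rw [Finset.mem_union] at hzAB
      push_neg at hzAB
      obtain ⟨c1, hc1⟩ := Finset.card_eq_one.mp hCA1
      have hz1 : z ∈ C \ A := Finset.mem_sdiff.mpr ⟨hz, hzAB.1⟩
      have hb1 : b ∈ C \ A := Finset.mem_sdiff.mpr ⟨hbC, hbB.2⟩
      rw [hc1, Finset.mem_singleton] at hz1 hb1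
      exact hzAB.2 (hz1 ▸ hb1 ▸ hbB.1)
  · -- a ∈ C, b ∉ C : contradiction
    exfalso
    obtain ⟨y, hy⟩ := Finset.card_eq_one.mp hAC1
    have hyAC : y ∈ A ∧ y ∉ C := Finset.mem_sdiff.mp (hy ▸ Finset.mem_singleton_self y)
    by_cases hyB : y ∈ B
    · obtain ⟨v, hv⟩ := Finset.card_eq_one.mp hBC1
      have h1 : y ∈ B \ C := Finset.mem_sdiff.mpr ⟨hyB, hyAC.2⟩
      have h2 : b ∈ B \ C := Finset.mem_sdiff.mpr ⟨hbB.1, hbC⟩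
      rw [hv, Finset.mem_singleton] at h1 h2
      have hyb : y = b := h1.trans h2.symm
      rw [hyb] at hyAC
      exact hbB.2 hyAC.1
    · have : y ∈ A \ B := Finset.mem_sdiff.mpr ⟨hyAC.1, hyB⟩
      rw [hab, Finset.mem_singleton] at this
      exact hyAC.2 (this ▸ haC)
  · -- a ∉ C, b ∈ C : contradiction
    exfalso
    obtain ⟨y, hy⟩ := Finset.card_eq_one.mp hBC1
    have hyBC : y ∈ B ∧ y ∉ C := Finset.mem_sdiff.mp (hy ▸ Finset.mem_singleton_self y)
    by_cases hyA : y ∈ A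
    · obtain ⟨w, hw⟩ := Finset.card_eq_one.mp hAC1
      have h1 : y ∈ A \ C := Finset.mem_sdiff.mpr ⟨hyA, hyBC.2⟩
      have h2 : a ∈ A \ C := Finset.mem_sdiff.mpr ⟨haA.1, haC⟩
      rw [hw, Finset.mem_singleton] at h1 h2
      have hya : y = a := h1.trans h2.symm
      rw [hya] at hyBC
      exact haA.2 hyBC.1
    · have : y ∈ B \ A := Finset.mem_sdiff.mpr ⟨hyBC.1, hyA⟩
      rw [hba, Finset.mem_singleton] at this
      exact hyBC.2 (this ▸ hbC)
  · -- neither in C : left case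
    left
    constructor
    · intro z hz
      rw [Finset.mem_inter] at hz
      by_contra hzC
      obtain ⟨w, hw⟩ := Finset.card_eq_one.mp hAC1
      have h1 : z ∈ A \ C := Finset.mem_sdiff.mpr ⟨hz.1, hzC⟩
      have h2 : a ∈ A \ C := Finset.mem_sdiff.mpr ⟨haA.1, haC⟩
      rw [hw, Finset.mem_singleton] at h1 h2
      have hza : z = a := h1.trans h2.symm
      rw [hza] at hz
      exact haA.2 hz.2
    · apply Finset.eq_empty_of_forall_notMem
      intro x hx
      rw [Finset.mem_inter] at hx
      rcases hsdAB x hx.2 with rfl | rfl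
      · exact haC hx.1
      · exact hbC hx.1
end

section
/- Let X be a finite set and A, B be q-subsets of X with |A △ B| = 2. If C and C' are q-subsets of X, each adjacent (symmetric difference of size 2) to both A and B, with A ∩ B ⊆ C, C ∩ (A △ B) = ∅, and A △ B ⊆ C' ⊆ A ∪ B, then |C △ C'| = 4; in particular C and C' are not adjacent. -/
lemma card_symmDiff_aux {α : Type*} [DecidableEq α] (s t : Finset α) :
    (symmDiff s t).card + 2 * (s ∩ t).card = s.card + t.card := by
  have h1 : (s \ t).card + (s ∩ t).card = s.card := Finset.card_sdiff_add_card_inter s t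
  have h2 : (t \ s).card + (t ∩ s).card = t.card := Finset.card_sdiff_add_card_inter t s
  have hd : Disjoint (s \ t) (t \ s) := disjoint_sdiff_sdiff
  have : (symmDiff s t).card = (s \ t).card + (t \ s).card := by
    rw [symmDiff_def, Finset.sup_eq_union, Finset.card_union_of_disjoint hd]
  rw [Finset.inter_comm] at h2
  omega

theorem stmt_1 {α : Type*} [DecidableEq α] (X : Finset α) (q : ℕ)
    (A B C C' : Finset α)
    (hA : A ⊆ X) (hB : B ⊆ X) (hC : C ⊆ X) (hC' : C' ⊆ X)
    (hAq : A.card = q) (hBq : B.card = q) (hCq : C.card = q) (hC'q : C'.card = q)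
    (hAB : (symmDiff A B).card = 2)
    (hCA : (symmDiff C A).card = 2) (hCB : (symmDiff C B).card = 2)
    (hC'A : (symmDiff C' A).card = 2) (hC'B : (symmDiff C' B).card = 2)
    (hICsub : A ∩ B ⊆ C) (hCdisj : C ∩ symmDiff A B = ∅)
    (hDsub : symmDiff A B ⊆ C') (hC'sub : C' ⊆ A ∪ B) :
    (symmDiff C C').card = 4 ∧ (symmDiff C C').card ≠ 2 := by
  have hq2 : 2 ≤ q := by
    have := Finset.card_le_card hDsub
    omega
  -- |A ∩ B| = q - 1
  have hABint := card_symmDiff_aux A B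
  rw [hAB, hAq, hBq] at hABint
  -- C ∩ C' = C' ∩ (A ∩ B)
  have hkey : C ∩ C' = C' ∩ (A ∩ B) := by
    ext x
    simp only [Finset.mem_inter]
    constructor
    · rintro ⟨hxC, hxC'⟩
      refine ⟨hxC', ?_⟩
      have hxAB : x ∈ A ∪ B := hC'sub hxC'
      have hnot : x ∉ symmDiff A B := by
        intro hx
        have : x ∈ C ∩ symmDiff A B := Finset.mem_inter.2 ⟨hxC, hx⟩
        simp [hCdisj] at this
      rw [Finset.mem_union] at hxAB
      rw [symmDiff_def, Finset.sup_eq_union, Finset.mem_union, Finset.mem_sdiff,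
        Finset.mem_sdiff] at hnot
      push_neg at hnot
      rcases hxAB with h | h
      · exact ⟨h, hnot.1 h⟩
      · exact ⟨hnot.2 h, h⟩
    · rintro ⟨hxC', hxAB⟩
      exact ⟨hICsub (Finset.mem_inter.2 hxAB), hxC'⟩
  -- C' = (A △ B) ∪ (C' ∩ (A ∩ B)), disjoint
  have hC'split : (symmDiff A B).card + (C' ∩ (A ∩ B)).card = q := by
    have hdisj : Disjoint (symmDiff A B) (C' ∩ (A ∩ B)) := by
      rw [Finset.disjoint_left]
      intro x hx hx'
      rw [symmDiff_def, Finset.sup_eq_union, Finset.mem_union, Finset.mem_sdiff,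
        Finset.mem_sdiff] at hx
      rw [Finset.mem_inter, Finset.mem_inter] at hx'
      tauto
    have hunion : symmDiff A B ∪ (C' ∩ (A ∩ B)) = C' := by
      apply Finset.Subset.antisymm
      · exact Finset.union_subset hDsub (Finset.inter_subset_left)
      · intro x hx
        by_cases hxd : x ∈ symmDiff A B
        · exact Finset.mem_union_left _ hxd
        · refine Finset.mem_union_right _ (Finset.mem_inter.2 ⟨hx, ?_⟩)
          have hxAB : x ∈ A ∪ B := hC'sub hx
          rw [Finset.mem_union] at hxAB
          rw [symmDiff_def, Finset.sup_eq_union, Finset.mem_union, Finset.mem_sdiff,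
            Finset.mem_sdiff] at hxd
          push_neg at hxd
          rcases hxAB with h | h
          · exact Finset.mem_inter.2 ⟨h, hxd.1 h⟩
          · exact Finset.mem_inter.2 ⟨hxd.2 h, h⟩
    rw [← Finset.card_union_of_disjoint hdisj, hunion, hC'q]
  have hfinal := card_symmDiff_aux C C'
  rw [hkey] at hfinal
  rw [hCq, hC'q, hAB] at *
  omega
end

section
/- Let A and B be two adjacent vertices (|A △ B| = 2) in a graph G whose vertices are q-subsets of a finite set X with adjacency given by symmetric difference of size 2. Then every clique of G containing both A and B is contained in U(A,B) ∪ I(A,B), where U(A,B) = {C ∈ V(G) : C ⊆ A ∪ B} and I(A,B) = {C ∈ V(G) : A ∩ B ⊆ C}. In particular, A and B lie in at most two maximal cliques of G. -/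
/-- Two finite sets are adjacent if their symmetric difference has exactly two elements. -/
def AdjSets {α : Type*} [DecidableEq α] (A B : Finset α) : Prop :=
  (symmDiff A B).card = 2

/-- A clique in the graph on the family `V` of `q`-subsets. -/
def IsCliqueFam {α : Type*} [DecidableEq α] (V : Set (Finset α)) (K : Set (Finset α)) : Prop :=
  K ⊆ V ∧ K.Pairwise AdjSets

namespace Stmt3Aux

variable {α : Type*} [DecidableEq α]

lemma symmDiff_card (A B : Finset α) :
    (symmDiff A B).card = (A \ B).card + (B \ A).card := by
  rw [symmDiff_def]
  exact Finset.card_union_of_disjoint disjoint_sdiff_sdiff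

lemma adj_cards {q : ℕ} {A B : Finset α} (hAq : A.card = q) (hBq : B.card = q)
    (h : AdjSets A B) :
    (A \ B).card = 1 ∧ (B \ A).card = 1 ∧ (A ∩ B).card = q - 1 ∧ 1 ≤ q := by
  have h1 := symmDiff_card A B
  have h2 : (A ∩ B).card + (A \ B).card = A.card := Finset.card_inter_add_card_sdiff A B
  have h3 : (B ∩ A).card + (B \ A).card = B.card := Finset.card_inter_add_card_sdiff B A
  rw [Finset.inter_comm] at h3
  unfold AdjSets at h
  omega

lemma adj_of_inter {q : ℕ} {C D : Finset α} (hCq : C.card = q) (hDq : D.card = q)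
    (hq : 1 ≤ q) (h : (C ∩ D).card = q - 1) : AdjSets C D := by
  have h1 := symmDiff_card C D
  have h2 : (C ∩ D).card + (C \ D).card = C.card := Finset.card_inter_add_card_sdiff C D
  have h3 : (D ∩ C).card + (D \ C).card = D.card := Finset.card_inter_add_card_sdiff D C
  rw [Finset.inter_comm] at h3
  unfold AdjSets
  omega

lemma inter_card_lt {q : ℕ} {C D : Finset α} (h : C ≠ D) (hC : C.card = q)
    (hD : D.card = q) : (C ∩ D).card < q := by
  rcases lt_or_ge (C ∩ D).card q with h' | h'
  · exact h'
  · exfalso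
    have h1 : C ∩ D = C :=
      Finset.eq_of_subset_of_card_le Finset.inter_subset_left (by omega)
    have h2 : C ⊆ D := by rw [← h1]; exact Finset.inter_subset_right
    exact h (Finset.eq_of_subset_of_card_le h2 (by omega))

lemma eq_singleton_of_mem {s : Finset α} {a : α} (hc : s.card = 1) (h : a ∈ s) :
    s = {a} := by
  obtain ⟨b, rfl⟩ := Finset.card_eq_one.mp hc
  rw [Finset.mem_singleton] at h
  rw [h]

lemma key {q : ℕ} {A B C : Finset α} (hAq : A.card = q) (hBq : B.card = q) (hCq : C.card = q)
    (hAB : AdjSets A B)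
    (hCA : C = A ∨ AdjSets C A) (hCB : C = B ∨ AdjSets C B)
    (hs : ¬ A ∩ B ⊆ C) : C ⊆ A ∪ B := by
  obtain ⟨s, hsAB, hsC⟩ := Finset.not_subset.mp hs
  rcases hCA with rfl | hCA
  · exact Finset.subset_union_left
  rcases hCB with rfl | hCB
  · exact Finset.subset_union_right
  have hCA' := adj_cards hCq hAq hCA
  have hAB' := adj_cards hAq hBq hAB
  have hCB' := adj_cards hCq hBq hCB
  have hq2 : 2 ≤ q := by
    have h1 : 0 < (A ∩ B).card := Finset.card_pos.mpr ⟨s, hsAB⟩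
    omega
  intro x hx
  by_contra hxAB
  rw [Finset.mem_union] at hxAB
  push_neg at hxAB
  obtain ⟨hxA, hxB⟩ := hxAB
  have hCAx : C \ A = {x} :=
    eq_singleton_of_mem hCA'.1 (Finset.mem_sdiff.mpr ⟨hx, hxA⟩)
  have hCBx : C \ B = {x} :=
    eq_singleton_of_mem hCB'.1 (Finset.mem_sdiff.mpr ⟨hx, hxB⟩)
  have hsub : C ⊆ insert x ((A ∩ B).erase s) := by
    intro t ht
    by_cases htx : t = x
    · subst htx; exact Finset.mem_insert_self _ _
    · have htA : t ∈ A := by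
        by_contra h'
        have : t ∈ C \ A := Finset.mem_sdiff.mpr ⟨ht, h'⟩
        rw [hCAx, Finset.mem_singleton] at this
        exact htx this
      have htB : t ∈ B := by
        by_contra h'
        have : t ∈ C \ B := Finset.mem_sdiff.mpr ⟨ht, h'⟩
        rw [hCBx, Finset.mem_singleton] at this
        exact htx this
      have hts : t ≠ s := fun h => hsC (h ▸ ht)
      exact Finset.mem_insert_of_mem
        (Finset.mem_erase.mpr ⟨hts, Finset.mem_inter.mpr ⟨htA, htB⟩⟩)
  have hle := Finset.card_le_card hsub
  have h1 : ((A ∩ B).erase s).card = (A ∩ B).card - 1 := Finset.card_erase_of_mem hsAB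
  have h2 := Finset.card_insert_le x ((A ∩ B).erase s)
  omega

end Stmt3Aux

theorem stmt_3 {α : Type*} [DecidableEq α] (X : Finset α) (q : ℕ)
    (V : Set (Finset α)) (hV : ∀ A ∈ V, A ⊆ X ∧ A.card = q)
    (A B : Finset α) (hA : A ∈ V) (hB : B ∈ V) (hAB : AdjSets A B) :
    (∀ K : Set (Finset α), IsCliqueFam V K → A ∈ K → B ∈ K →
      K ⊆ {C ∈ V | C ⊆ A ∪ B} ∪ {C ∈ V | A ∩ B ⊆ C}) ∧
    Set.ncard {K : Set (Finset α) | IsCliqueFam V K ∧ A ∈ K ∧ B ∈ K ∧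
      ∀ K' : Set (Finset α), IsCliqueFam V K' → K ⊆ K' → K' = K} ≤ 2 := by
  classical
  obtain ⟨hAX, hAq⟩ := hV A hA
  obtain ⟨hBX, hBq⟩ := hV B hB
  have hAB' := Stmt3Aux.adj_cards hAq hBq hAB
  obtain ⟨hABd, hBAd, hABi, hq1⟩ := hAB'
  have hABu : (A ∪ B).card = q + 1 := by
    have := Finset.card_inter_add_card_union A B
    omega
  -- part 1
  have part1 : ∀ K : Set (Finset α), IsCliqueFam V K → A ∈ K → B ∈ K →
      K ⊆ {C ∈ V | C ⊆ A ∪ B} ∪ {C ∈ V | A ∩ B ⊆ C} := by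
    intro K ⟨hKV, hKp⟩ hAK hBK
    intro C hC
    have hCV : C ∈ V := hKV hC
    have hCq : C.card = q := (hV C hCV).2
    by_cases hI : A ∩ B ⊆ C
    · exact Or.inr ⟨hCV, hI⟩
    · left
      refine ⟨hCV, ?_⟩
      apply Stmt3Aux.key hAq hBq hCq hAB ?_ ?_ hI
      · by_cases h : C = A
        · exact Or.inl h
        · exact Or.inr (hKp hC hAK h)
      · by_cases h : C = B
        · exact Or.inl h
        · exact Or.inr (hKp hC hBK h)
  refine ⟨part1, ?_⟩
  set U : Set (Finset α) := {C ∈ V | C ⊆ A ∪ B} with hU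
  set I : Set (Finset α) := {C ∈ V | A ∩ B ⊆ C} with hI
  have hUclique : IsCliqueFam V U := by
    refine ⟨fun C hC => hC.1, ?_⟩
    intro C hC D hD hne
    have hCq : C.card = q := (hV C hC.1).2
    have hDq : D.card = q := (hV D hD.1).2
    apply Stmt3Aux.adj_of_inter hCq hDq hq1
    have h1 : (C ∪ D).card ≤ q + 1 := by
      rw [← hABu]
      exact Finset.card_le_card (Finset.union_subset hC.2 hD.2)
    have h2 := Finset.card_inter_add_card_union C D
    have h3 := Stmt3Aux.inter_card_lt hne hCq hDq
    omega
  have hIclique : IsCliqueFam V I := by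
    refine ⟨fun C hC => hC.1, ?_⟩
    intro C hC D hD hne
    have hCq : C.card = q := (hV C hC.1).2
    have hDq : D.card = q := (hV D hD.1).2
    apply Stmt3Aux.adj_of_inter hCq hDq hq1
    have h1 : q - 1 ≤ (C ∩ D).card := by
      rw [← hABi]
      exact Finset.card_le_card (Finset.subset_inter hC.2 hD.2)
    have h3 := Stmt3Aux.inter_card_lt hne hCq hDq
    omega
  -- no clique contains elements of U \ I and I \ U simultaneously
  have hnoadj : ∀ u ∈ U, u ∉ I → ∀ i ∈ I, i ∉ U → ¬ AdjSets u i := by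
    intro u hu huI i hi hiU hadj
    have huq : u.card = q := (hV u hu.1).2
    have hiq : i.card = q := (hV i hi.1).2
    obtain ⟨s, hsAB, hsu⟩ : ∃ s ∈ A ∩ B, s ∉ u := by
      by_contra h; push_neg at h; exact huI ⟨hu.1, h⟩
    obtain ⟨x, hxi, hxAB⟩ : ∃ x ∈ i, x ∉ A ∪ B := by
      by_contra h; push_neg at h; exact hiU ⟨hi.1, h⟩
    have hq2 : 2 ≤ q := by
      have h1 : 0 < (A ∩ B).card := Finset.card_pos.mpr ⟨s, hsAB⟩
      omega
    -- i ∩ (A ∪ B) = A ∩ B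
    have hiAB : A ∩ B = i ∩ (A ∪ B) := by
      apply Finset.eq_of_subset_of_card_le
      · exact Finset.subset_inter hi.2
          (Finset.inter_subset_left.trans Finset.subset_union_left |>.trans
            (by exact Finset.union_subset_union (le_refl A) (le_refl B)))
      · have hsub : i ∩ (A ∪ B) ⊆ i.erase x := by
          intro t ht
          rw [Finset.mem_erase]
          rw [Finset.mem_inter] at ht
          exact ⟨fun h => hxAB (h ▸ ht.2), ht.1⟩
        have h1 := Finset.card_le_card hsub
        have h2 : (i.erase x).card = i.card - 1 := Finset.card_erase_of_mem hxi
        omega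
    have hinter : u ∩ i ⊆ (A ∩ B).erase s := by
      intro t ht
      rw [Finset.mem_inter] at ht
      rw [Finset.mem_erase]
      constructor
      · exact fun h => hsu (h ▸ ht.1)
      · rw [hiAB, Finset.mem_inter]
        exact ⟨ht.2, hu.2 ht.1⟩
    have h1 := Finset.card_le_card hinter
    have h2 : ((A ∩ B).erase s).card = (A ∩ B).card - 1 := Finset.card_erase_of_mem hsAB
    have h3 := Stmt3Aux.symmDiff_card u i
    have h4 : (u ∩ i).card + (u \ i).card = u.card := Finset.card_inter_add_card_sdiff u i
    have h5 : (i ∩ u).card + (i \ u).card = i.card := Finset.card_inter_add_card_sdiff i u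
    rw [Finset.inter_comm] at h5
    unfold AdjSets at hadj
    omega
  -- every maximal clique containing A and B is U or I
  have hsub : {K : Set (Finset α) | IsCliqueFam V K ∧ A ∈ K ∧ B ∈ K ∧
      ∀ K' : Set (Finset α), IsCliqueFam V K' → K ⊆ K' → K' = K} ⊆ {U, I} := by
    rintro K ⟨hK, hAK, hBK, hmax⟩
    have hKsub := part1 K hK hAK hBK
    by_cases hKU : K ⊆ U
    · left; exact (hmax U hUclique hKU).symm
    · right
      have hKI : K ⊆ I := by
        obtain ⟨i, hiK, hiU⟩ := Set.not_subset.mp hKU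
        have hiI : i ∈ I := (hKsub hiK).resolve_left hiU
        intro u huK
        by_contra huI
        have huU : u ∈ U := (hKsub huK).resolve_right huI
        have hne : u ≠ i := fun h => huI (h ▸ hiI)
        exact hnoadj u huU huI i hiI hiU (hK.2 huK hiK hne)
      exact (hmax I hIclique hKI).symm
  calc Set.ncard {K : Set (Finset α) | IsCliqueFam V K ∧ A ∈ K ∧ B ∈ K ∧
      ∀ K' : Set (Finset α), IsCliqueFam V K' → K ⊆ K' → K' = K}
      ≤ Set.ncard {U, I} := Set.ncard_le_ncard hsub (Set.toFinite _)
    _ ≤ 2 := by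
        refine (Set.ncard_insert_le U {I}).trans ?_
        simp [Set.ncard_singleton]
end

section
/- Let T be a spanning tree of Kₙ (n ≥ 3). Then T is a star (a tree of diameter at most 2, i.e., all edges share a common vertex) if and only if every spanning tree T' of Kₙ satisfies |E(T) △ E(T')| ≤ 2(n-2), i.e., T shares at least one edge with every spanning tree. -/
/-!
By counting edges, `|E(T) △ E(T')| = 2(n - 1) - 2|E(T) ∩ E(T')|`, so the bound says exactly that
`T` and `T'` share an edge. A star contains every edge at its centre, and every spanning tree
has an edge there. Conversely, if the complement of an acyclic graph `T` is disconnected, all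
edges between a component `A` of `Tᶜ` and the rest lie in `T`; since `T` contains no 4-cycle,
`A` or its complement is a single vertex, which is then adjacent to every other vertex, making
`T` a star. So when `T` is not a star, `Tᶜ` is connected and has a spanning tree disjoint
from `T`.
-/

open SimpleGraph

/-- A graph is a star if all of its edges share a common vertex. -/
def IsStar {V : Type*} (T : SimpleGraph V) : Prop :=
  ∃ c : V, ∀ e ∈ T.edgeSet, c ∈ e

theorem Set.ncard_symmDiff_add_two_mul_ncard_inter {α : Type*} {s t : Set α} (hs : s.Finite)
    (ht : t.Finite) : (symmDiff s t).ncard + 2 * (s ∩ t).ncard = s.ncard + t.ncard := by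
  have hsub : s ∩ t ⊆ s ∪ t := Set.inter_subset_left.trans Set.subset_union_left
  rw [symmDiff_eq_sup_sdiff_inf, ← Set.ncard_union_add_ncard_inter s t hs ht, two_mul,
    ← add_assoc]
  exact congrArg (· + _) (Set.ncard_sdiff_add_ncard_of_subset hsub (hs.union ht))

namespace SimpleGraph

variable {V : Type*} {G H : SimpleGraph V}

lemma IsTree.ncard_edgeSet_add_one [Fintype V] (hG : G.IsTree) :
    G.edgeSet.ncard + 1 = Fintype.card V := by
  classical
  rw [Set.ncard_eq_toFinset_card', ← hG.card_edgeFinset]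
  rfl

lemma IsTree.ncard_symmDiff_edgeSet_le_iff [Fintype V] [Nontrivial V] (hG : G.IsTree)
    (hH : H.IsTree) :
    (symmDiff G.edgeSet H.edgeSet).ncard ≤ 2 * (Fintype.card V - 2) ↔
      (G.edgeSet ∩ H.edgeSet).Nonempty := by
  have hcount := Set.ncard_symmDiff_add_two_mul_ncard_inter G.edgeSet.toFinite H.edgeSet.toFinite
  have hG' := hG.ncard_edgeSet_add_one
  have hH' := hH.ncard_edgeSet_add_one
  have hV := Fintype.one_lt_card (α := V)
  rw [← Set.ncard_pos]
  omega

lemma IsAcyclic.not_adj_of_adj_of_adj (h : G.IsAcyclic) {a b c : V} (hab : G.Adj a b)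
    (hbc : G.Adj b c) : ¬G.Adj c a := fun hca => by
  refine h (.cons hab (.cons hbc (.cons hca .nil))) ?_
  simp [Walk.isCycle_def, Walk.isTrail_def, hab.ne, hbc.ne, hca.ne, hab.ne', hca.ne']

lemma IsAcyclic.not_adj_of_adj_of_adj_of_adj (h : G.IsAcyclic) {a b c d : V} (hab : G.Adj a b)
    (hbc : G.Adj b c) (hcd : G.Adj c d) (hac : a ≠ c) (hbd : b ≠ d) : ¬G.Adj d a := fun hda => by
  refine h (.cons hab (.cons hbc (.cons hcd (.cons hda .nil)))) ?_
  simp [Walk.isCycle_def, Walk.isTrail_def, hab.ne, hbc.ne, hcd.ne, hda.ne, hab.ne', hda.ne',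
    hac, hbd, hac.symm]

lemma IsAcyclic.isStar_of_forall_adj (h : G.IsAcyclic) {c : V} (hc : ∀ x ≠ c, G.Adj c x) :
    IsStar G := by
  refine ⟨c, fun e he => ?_⟩
  induction e using Sym2.ind with
  | _ x y =>
    by_contra hce
    simp only [Sym2.mem_iff, not_or] at hce
    exact h.not_adj_of_adj_of_adj (hc x (Ne.symm hce.1)) he (hc y (Ne.symm hce.2)).symm

lemma IsAcyclic.subsingleton_or_subsingleton_compl (h : G.IsAcyclic) {s : Set V}
    (hs : ∀ a ∈ s, ∀ b ∉ s, G.Adj a b) : s.Subsingleton ∨ sᶜ.Subsingleton := by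
  by_contra! hnt
  obtain ⟨a, ha, a', ha', haa'⟩ := hnt.1
  obtain ⟨b, hb, b', hb', hbb'⟩ := hnt.2
  exact h.not_adj_of_adj_of_adj_of_adj (hs a ha b hb) (hs a' ha' b hb).symm (hs a' ha' b' hb')
    haa' hbb' (hs a ha b' hb').symm

lemma IsAcyclic.preconnected_compl (h : G.IsAcyclic) (hG : ¬IsStar G) : Gᶜ.Preconnected := by
  intro u v
  by_contra huv
  set s := {x | Gᶜ.Reachable u x}
  have hcut : ∀ a ∈ s, ∀ b ∉ s, G.Adj a b := fun a ha b hb => by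
    by_contra hab
    have hne : a ≠ b := by
      rintro rfl
      exact hb ha
    exact hb (Reachable.trans ha (Adj.reachable ⟨hne, hab⟩))
  rcases h.subsingleton_or_subsingleton_compl hcut with hs | hs
  · exact hG <| h.isStar_of_forall_adj fun x hx =>
      hcut u (Reachable.refl u) x fun hxs => hx (hs hxs (Reachable.refl u))
  · exact hG <| h.isStar_of_forall_adj fun x hx =>
      (hcut x (by_contra fun hxs => hx (hs hxs huv)) v huv).symm

lemma IsStar.inter_edgeSet_nonempty [Nontrivial V] (hS : IsStar G) (hG : G.Connected)
    (hH : H.Connected) : (G.edgeSet ∩ H.edgeSet).Nonempty := by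
  obtain ⟨c, hc⟩ := hS
  obtain ⟨z, hz⟩ := hH.preconnected.exists_adj_of_nontrivial c
  obtain ⟨w, hw⟩ := hG.preconnected.exists_adj_of_nontrivial z
  rcases Sym2.mem_iff.mp (hc s(z, w) hw) with rfl | rfl
  · exact absurd rfl hz.ne
  · exact ⟨s(c, z), hw.symm, hz⟩

end SimpleGraph

theorem stmt_7 (n : ℕ) (hn : 3 ≤ n) (T : SimpleGraph (Fin n)) (hT : T.IsTree) :
    IsStar T ↔ ∀ T' : SimpleGraph (Fin n), T'.IsTree →
      (symmDiff T.edgeSet T'.edgeSet).ncard ≤ 2 * (n - 2) := by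
  have : Nontrivial (Fin n) := Fin.nontrivial_iff_two_le.mpr (by omega)
  have hshare : ∀ T' : SimpleGraph (Fin n), T'.IsTree →
      ((symmDiff T.edgeSet T'.edgeSet).ncard ≤ 2 * (n - 2) ↔
        (T.edgeSet ∩ T'.edgeSet).Nonempty) := fun T' hT' => by
    simpa only [Fintype.card_fin] using hT.ncard_symmDiff_edgeSet_le_iff hT'
  refine ⟨fun hS T' hT' =>
    (hshare T' hT').mpr (hS.inter_edgeSet_nonempty hT.connected hT'.connected), fun h => ?_⟩
  by_contra hS
  obtain ⟨H, hHle, hH⟩ := (Connected.mk (hT.isAcyclic.preconnected_compl hS)).exists_isTree_le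
  obtain ⟨e, heT, heH⟩ := (hshare H hH).mp (h H hH)
  exact Set.disjoint_left.mp (disjoint_edgeSet.mpr (disjoint_compl_right.mono_right hHle)) heT heH
end

section
/- Let T be a spanning tree of Kₙ and p, q distinct vertices each of degree at least 2 in T. Then {p,q} ∈ E(T) if and only if there exists a spanning tree T' of Kₙ with |E(T) △ E(T')| = 2 such that deg_{T'}(p) = deg_T(p) - 1 and deg_{T'}(q) = deg_T(q) - 1. -/
/-!
Deleting the edge `pq` splits the tree `T` into the component of `p` and the component of `q`;
joining a neighbour `a ≠ q` of `p` to a neighbour `b ≠ p` of `q` reconnects them, so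
`T - pq + ab` is a tree, and it lowers the degrees of `p` and `q` by exactly one.
Conversely, two trees on the same finite vertex set have equally many edges, so a symmetric
difference of size two means exactly one edge of `T` is removed. Each of `p` and `q` loses a
neighbour, so that removed edge contains both of them and is `pq`.
-/

open SimpleGraph

namespace Set

variable {α : Type*} {s t : Set α}

theorem ncard_sdiff_eq_one_of_ncard_symmDiff_eq_two (hs : s.Finite) (ht : t.Finite)
    (hst : s.ncard = t.ncard) (h : (symmDiff s t).ncard = 2) : (s \ t).ncard = 1 := by
  rw [Set.symmDiff_def, ncard_union_eq disjoint_sdiff_sdiff hs.sdiff ht.sdiff] at h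
  have := (ncard_eq_ncard_iff_ncard_sdiff_eq_ncard_sdiff hs ht).mp hst
  omega

theorem symmDiff_insert_sdiff_singleton {e f : α} (he : e ∈ s) (hf : f ∉ s) :
    symmDiff s (insert f (s \ {e})) = {e, f} := by
  ext x
  simp only [Set.symmDiff_def, mem_union, mem_sdiff, mem_insert_iff, mem_singleton_iff]
  constructor
  · rintro (⟨hx, hxf⟩ | ⟨rfl | ⟨hx, hxe⟩, hxs⟩) <;> tauto
  · rintro (rfl | rfl)
    · exact .inl ⟨he, by rintro (rfl | ⟨-, h⟩); exacts [hf he, h rfl]⟩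
    · exact .inr ⟨.inl rfl, hf⟩

end Set

namespace SimpleGraph

variable {V : Type*} {G H T T' : SimpleGraph V} {p q a b : V}

theorem Connected.of_forall_adj_reachable (hG : G.Connected)
    (h : ∀ ⦃u v⦄, G.Adj u v → H.Reachable u v) : H.Connected := by
  refine (connected_iff H).mpr ⟨fun x y => ?_, hG.nonempty⟩
  obtain ⟨w⟩ := hG.preconnected x y
  induction w with
  | nil => rfl
  | cons huv _ ih => exact (h huv).trans ih

def exchange (G : SimpleGraph V) (p q a b : V) : SimpleGraph V :=
  G.deleteEdges {s(p, q)} ⊔ edge a b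

theorem exchange_comm : G.exchange p q a b = G.exchange q p a b := by
  rw [exchange, exchange, Sym2.eq_swap]

theorem edgeSet_exchange (hab : a ≠ b) :
    (G.exchange p q a b).edgeSet = insert s(a, b) (G.edgeSet \ {s(p, q)}) := by
  rw [exchange, edgeSet_sup, edgeSet_deleteEdges, edgeSet_edge_of_ne hab, Set.union_comm,
    Set.singleton_union]

theorem neighborSet_exchange_left (hap : a ≠ p) (hbp : b ≠ p) :
    (G.exchange p q a b).neighborSet p = G.neighborSet p \ {q} := by
  ext x
  simp only [exchange, mem_neighborSet, sup_adj, deleteEdges_adj, edge_adj, Set.mem_sdiff,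
    Set.mem_singleton_iff, Sym2.eq_iff]
  grind [G.ne_of_adj]

theorem neighborSet_exchange_right (haq : a ≠ q) (hbq : b ≠ q) :
    (G.exchange p q a b).neighborSet q = G.neighborSet q \ {p} := by
  rw [exchange_comm, neighborSet_exchange_left haq hbq]

theorem reachable_deleteEdges_of_adj_left (hpa : G.Adj p a) (haq : a ≠ q) :
    (G.deleteEdges {s(p, q)}).Reachable p a :=
  ((deleteEdges_adj ..).mpr ⟨hpa, fun h => haq (Sym2.congr_right.mp h)⟩).reachable

theorem reachable_deleteEdges_of_adj_right (hqb : G.Adj q b) (hbp : b ≠ p) :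
    (G.deleteEdges {s(p, q)}).Reachable q b := by
  rw [Sym2.eq_swap]
  exact reachable_deleteEdges_of_adj_left hqb hbp

theorem IsTree.not_reachable_deleteEdges (hT : T.IsTree) (hpq : T.Adj p q)
    (ha : (T.deleteEdges {s(p, q)}).Reachable p a)
    (hb : (T.deleteEdges {s(p, q)}).Reachable q b) :
    ¬(T.deleteEdges {s(p, q)}).Reachable a b := fun hab =>
  isBridge_iff.mp (isAcyclic_iff_forall_adj_isBridge.mp hT.isAcyclic hpq)
    (ha.trans (hab.trans hb.symm))

theorem IsTree.exchange (hT : T.IsTree) (hpq : T.Adj p q)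
    (ha : (T.deleteEdges {s(p, q)}).Reachable p a)
    (hb : (T.deleteEdges {s(p, q)}).Reachable q b) :
    (T.exchange p q a b).IsTree := by
  have hab := hT.not_reachable_deleteEdges hpq ha hb
  have hle : T.deleteEdges {s(p, q)} ≤ T.exchange p q a b := le_sup_left
  have hpq' : (T.exchange p q a b).Reachable p q := by
    have hab' : (T.exchange p q a b).Adj a b :=
      Or.inr ((edge_adj ..).mpr ⟨.inl ⟨rfl, rfl⟩, fun h => hab (h ▸ .rfl)⟩)
    exact (ha.mono hle).trans (hab'.reachable.trans (hb.mono hle).symm)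
  refine ⟨hT.connected.of_forall_adj_reachable fun u v huv => ?_,
    (hT.isAcyclic.anti (deleteEdges_le _)).sup_edge_of_not_reachable hab⟩
  by_cases h : s(u, v) = s(p, q)
  · rcases Sym2.eq_iff.mp h with ⟨rfl, rfl⟩ | ⟨rfl, rfl⟩
    exacts [hpq', hpq'.symm]
  · exact (hle ((deleteEdges_adj ..).mpr ⟨huv, h⟩)).reachable

theorem IsTree.ncard_symmDiff_exchange (hT : T.IsTree) (hpq : T.Adj p q) (hpa : T.Adj p a)
    (haq : a ≠ q) (hqb : T.Adj q b) (hbp : b ≠ p) :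
    (symmDiff T.edgeSet (T.exchange p q a b).edgeSet).ncard = 2 := by
  have hab := hT.not_reachable_deleteEdges hpq (reachable_deleteEdges_of_adj_left hpa haq)
    (reachable_deleteEdges_of_adj_right hqb hbp)
  have hne : s(p, q) ≠ s(a, b) := by
    rintro h
    rcases Sym2.eq_iff.mp h with ⟨hpa', -⟩ | ⟨-, hqa⟩
    exacts [hpa.ne hpa', haq hqa.symm]
  have hnab : ¬T.Adj a b := fun h =>
    hab ((deleteEdges_adj ..).mpr ⟨h, fun h' => hne (Set.mem_singleton_iff.mp h').symm⟩).reachable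
  rw [edgeSet_exchange (by rintro rfl; exact hab .rfl),
    Set.symmDiff_insert_sdiff_singleton (T.mem_edgeSet.mpr hpq) hnab, Set.ncard_pair hne]

theorem IsTree.ncard_edgeSet_eq [Finite V] (hT : T.IsTree) (hT' : T'.IsTree) :
    T.edgeSet.ncard = T'.edgeSet.ncard := by
  have h := (isTree_iff_connected_and_card.mp hT).2
  have h' := (isTree_iff_connected_and_card.mp hT').2
  simp only [Nat.card_coe_set_eq] at h h'
  omega

theorem exists_mem_edgeSet_sdiff_of_ncard_neighborSet_lt [Finite V] {r : V}
    (h : (T'.neighborSet r).ncard < (T.neighborSet r).ncard) :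
    ∃ x, s(r, x) ∈ T.edgeSet \ T'.edgeSet := by
  by_contra! hsub
  refine h.not_ge (Set.ncard_le_ncard fun x hx => ?_)
  by_contra hx'
  exact hsub x ⟨hx, hx'⟩

theorem IsTree.adj_of_ncard_symmDiff_eq_two [Finite V] (hT : T.IsTree) (hT' : T'.IsTree)
    (h : (symmDiff T.edgeSet T'.edgeSet).ncard = 2) (hpq : p ≠ q)
    (hp : (T'.neighborSet p).ncard < (T.neighborSet p).ncard)
    (hq : (T'.neighborSet q).ncard < (T.neighborSet q).ncard) : T.Adj p q := by
  obtain ⟨e, he⟩ := Set.ncard_eq_one.mp (Set.ncard_sdiff_eq_one_of_ncard_symmDiff_eq_two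
    (Set.toFinite _) (Set.toFinite _) (hT.ncard_edgeSet_eq hT') h)
  obtain ⟨x, hx⟩ := exists_mem_edgeSet_sdiff_of_ncard_neighborSet_lt hp
  obtain ⟨y, hy⟩ := exists_mem_edgeSet_sdiff_of_ncard_neighborSet_lt hq
  have hxy : s(p, x) = s(q, y) := by
    rw [he] at hx hy
    exact hx.trans hy.symm
  obtain ⟨rfl, -⟩ | ⟨-, rfl⟩ := Sym2.eq_iff.mp hxy
  exacts [absurd rfl hpq, hx.1]

end SimpleGraph

theorem stmt_11_general (n : ℕ) (T : SimpleGraph (Fin n)) (hT : T.IsTree)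
    (p q : Fin n) (hpq : p ≠ q)
    (hp : 2 ≤ (T.neighborSet p).ncard) (hq : 2 ≤ (T.neighborSet q).ncard) :
    T.Adj p q ↔ ∃ T' : SimpleGraph (Fin n), T'.IsTree ∧
      (symmDiff T.edgeSet T'.edgeSet).ncard = 2 ∧
      (T'.neighborSet p).ncard = (T.neighborSet p).ncard - 1 ∧
      (T'.neighborSet q).ncard = (T.neighborSet q).ncard - 1 := by
  constructor
  · intro h
    obtain ⟨a, hpa, haq⟩ := Set.exists_ne_of_one_lt_ncard hp q
    obtain ⟨b, hqb, hbp⟩ := Set.exists_ne_of_one_lt_ncard hq p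
    refine ⟨T.exchange p q a b, hT.exchange h (reachable_deleteEdges_of_adj_left hpa haq)
      (reachable_deleteEdges_of_adj_right hqb hbp),
      hT.ncard_symmDiff_exchange h hpa haq hqb hbp, ?_, ?_⟩
    · rw [neighborSet_exchange_left hpa.ne' hbp,
        Set.ncard_sdiff_singleton_of_mem (s := T.neighborSet p) h]
    · rw [neighborSet_exchange_right haq hqb.ne',
        Set.ncard_sdiff_singleton_of_mem (s := T.neighborSet q) h.symm]
  · rintro ⟨T', hT', hsd, hdp, hdq⟩
    exact hT.adj_of_ncard_symmDiff_eq_two hT' hsd hpq (by omega) (by omega)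

theorem stmt_11 (n : ℕ) (hn : 4 ≤ n) (T : SimpleGraph (Fin n)) (hT : T.IsTree)
    (p q : Fin n) (hpq : p ≠ q)
    (hp : 2 ≤ (T.neighborSet p).ncard) (hq : 2 ≤ (T.neighborSet q).ncard) :
    T.Adj p q ↔ ∃ T' : SimpleGraph (Fin n), T'.IsTree ∧
      (symmDiff T.edgeSet T'.edgeSet).ncard = 2 ∧
      (T'.neighborSet p).ncard = (T.neighborSet p).ncard - 1 ∧
      (T'.neighborSet q).ncard = (T.neighborSet q).ncard - 1 :=
  stmt_11_general n T hT p q hpq hp hq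
end

section
/- Let p, q, x, y be four distinct points in a finite point set P in general position in the plane. If the closed segments [p,x] and [q,y] do not cross (their relative interiors are disjoint), then there exists a pq-brush containing both edges {p,x} and {q,y}: a non-crossing spanning tree of P all of whose edges are incident to p or to q, containing the edge {p,q}, the edge {p,x}, and the edge {q,y}. -/
/-- Two segments (given by their endpoints) cross if their relative interiors
(open segments) meet. -/
def Cross (a b c d : ℝ × ℝ) : Prop :=
  (openSegment ℝ a b ∩ openSegment ℝ c d).Nonempty

/-- A finite point set is in general position if no three of its points are collinear. -/
def GenPos (P : Finset (ℝ × ℝ)) : Prop :=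
  ∀ a ∈ P, ∀ b ∈ P, ∀ c ∈ P, a ≠ b → a ≠ c → b ≠ c →
    ¬ Collinear ℝ ({a, b, c} : Set (ℝ × ℝ))

/-- A geometric graph on the point set `P` is non-crossing if no two distinct edges cross. -/
def NonCrossing {P : Finset (ℝ × ℝ)} (T : SimpleGraph P) : Prop :=
  ∀ a b c d : P, T.Adj a b → T.Adj c d → s(a, b) ≠ s(c, d) →
    ¬ Cross (a : ℝ × ℝ) b c d

/-! Since no three points of `P` are collinear, the closed segments `[p, x]` and `[q, y]` are
disjoint, so some half-plane `H` contains the first and misses the second. Join `p` to `q`, every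
other point of `H` to `p` and every remaining point to `q`. Each point other than `q` hangs off a
parent closer to `q`, so this is a spanning tree. Two of its edges either share an endpoint, and
then cannot cross by general position, or one joins `p` to a point of `H` and the other joins `q`
to a point outside `H`, and the half-plane separates them. -/

theorem Cross.symm {a b c d : ℝ × ℝ} (h : Cross a b c d) : Cross c d a b := by
  rwa [Cross, Set.inter_comm]

theorem cross_congr {P : Finset (ℝ × ℝ)} {a b c d a' b' c' d' : P} (hab : s(a, b) = s(a', b'))
    (hcd : s(c, d) = s(c', d')) :
    Cross (a : ℝ × ℝ) b c d ↔ Cross (a' : ℝ × ℝ) b' c' d' := by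
  rcases Sym2.eq_iff.1 hab with ⟨rfl, rfl⟩ | ⟨rfl, rfl⟩ <;>
  rcases Sym2.eq_iff.1 hcd with ⟨rfl, rfl⟩ | ⟨rfl, rfl⟩ <;>
  simp only [Cross, openSegment_symm ℝ (a : ℝ × ℝ) b, openSegment_symm ℝ (c : ℝ × ℝ) d]

theorem collinear_of_cross_of_right_eq {o a b : ℝ × ℝ} (hoa : o ≠ a)
    (h : Cross a o b o) : Collinear ℝ ({o, a, b} : Set (ℝ × ℝ)) := by
  obtain ⟨u, hua, hub⟩ := h
  rw [openSegment_symm] at hua hub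
  have hou : o ≠ u := by
    rintro rfl
    exact hoa (left_mem_openSegment_iff.1 hua)
  have mem_line : ∀ {z}, u ∈ openSegment ℝ o z → z ∈ line[ℝ, o, u] := fun hz =>
    (mem_segment_iff_wbtw.1 (openSegment_subset_segment ℝ _ _ hz)).collinear
      |>.mem_affineSpan_of_mem_of_ne (by simp) (by simp) (by simp) hou
  exact collinear_triple_of_mem_affineSpan_pair (left_mem_affineSpan_pair ℝ o u)
    (mem_line hua) (mem_line hub)

theorem not_cross_of_disjoint_convex {s t : Set (ℝ × ℝ)} (hs : Convex ℝ s) (ht : Convex ℝ t)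
    (hst : Disjoint s t) {a b c d : ℝ × ℝ} (ha : a ∈ s) (hb : b ∈ s) (hc : c ∈ t) (hd : d ∈ t) :
    ¬ Cross a b c d := fun ⟨_, hab, hcd⟩ =>
  hst.ne_of_mem (hs.openSegment_subset ha hb hab) (ht.openSegment_subset hc hd hcd) rfl

namespace GenPos

variable {P : Finset (ℝ × ℝ)}

theorem notMem_openSegment (hgen : GenPos P) {a b c : ℝ × ℝ} (ha : a ∈ P) (hb : b ∈ P) (hc : c ∈ P)
    (hbc : b ≠ c) : a ∉ openSegment ℝ b c := by
  intro h
  have hab : a ≠ b := by rintro rfl; exact hbc (left_mem_openSegment_iff.1 h)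
  have hac : a ≠ c := by rintro rfl; exact hbc (right_mem_openSegment_iff.1 h)
  refine hgen a ha b hb c hc hab hac hbc ?_
  rw [Set.insert_comm]
  exact (mem_segment_iff_wbtw.1 (openSegment_subset_segment ℝ _ _ h)).collinear

theorem not_cross_of_right_eq (hgen : GenPos P) {o a b : ℝ × ℝ} (ho : o ∈ P) (ha : a ∈ P)
    (hb : b ∈ P) (hoa : o ≠ a) (hob : o ≠ b) (hab : a ≠ b) : ¬ Cross a o b o := fun h =>
  hgen o ho a ha b hb hoa hob hab (collinear_of_cross_of_right_eq hoa h)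

theorem disjoint_segment (hgen : GenPos P) {p x q y : ℝ × ℝ} (hp : p ∈ P) (hx : x ∈ P)
    (hq : q ∈ P) (hy : y ∈ P) (hd : [p, q, x, y].Pairwise (· ≠ ·)) (hnc : ¬ Cross p x q y) :
    Disjoint (segment ℝ p x) (segment ℝ q y) := by
  simp only [List.pairwise_cons, List.mem_cons, List.not_mem_nil, forall_eq_or_imp] at hd
  obtain ⟨⟨hpq, hpx, hpy, -⟩, ⟨hqx, hqy, -⟩, ⟨hxy, -⟩, -⟩ := hd
  rw [Set.disjoint_left]
  intro u hu hv
  rw [← insert_endpoints_openSegment] at hu hv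
  rcases hu with rfl | rfl | hu <;> rcases hv with h | h | hv
  all_goals first
    | grind
    | exact hnc ⟨u, hu, hv⟩
    | exact hgen.notMem_openSegment (by assumption) hq hy hqy hv
    | exact hgen.notMem_openSegment (by assumption) hp hx hpx (h ▸ hu)

end GenPos

theorem isCompact_segment {E : Type*} [NormedAddCommGroup E] [NormedSpace ℝ E] (a b : E) :
    IsCompact (segment ℝ a b) := by
  rw [← convexHull_pair]
  exact (Set.toFinite _).isCompact_convexHull ℝ

theorem exists_convex_convex_compl_separating {E : Type*} [NormedAddCommGroup E]
    [NormedSpace ℝ E] {A B : Set E} (hAc : Convex ℝ A) (hA : IsCompact A) (hBc : Convex ℝ B)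
    (hB : IsClosed B) (hAB : Disjoint A B) :
    ∃ H : Set E, Convex ℝ H ∧ Convex ℝ Hᶜ ∧ A ⊆ H ∧ B ⊆ Hᶜ := by
  obtain ⟨f, u, v, hfA, huv, hfB⟩ := geometric_hahn_banach_compact_closed hAc hA hBc hB hAB
  refine ⟨{z | f z < u}, convex_halfSpace_lt f.isLinear u, ?_, hfA, ?_⟩
  · simpa only [Set.compl_ofPred, not_lt] using convex_halfSpace_ge ⟨map_add f, map_smul f⟩ u
  · exact fun b hb => (huv.trans (hfB b hb)).not_gt

section ParentGraph

variable {V : Type*}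

def parentGraph (r : V) (par : V → V) : SimpleGraph V :=
  SimpleGraph.fromEdgeSet ((fun v => s(v, par v)) '' {r}ᶜ)

variable {r : V} {par : V → V}

theorem parentGraph_adj {a b : V} :
    (parentGraph r par).Adj a b ↔ a ≠ b ∧ (a ≠ r ∧ par a = b ∨ b ≠ r ∧ par b = a) := by
  simp only [parentGraph, SimpleGraph.fromEdgeSet_adj, Set.mem_image, Set.mem_compl_singleton_iff,
    Sym2.eq_iff]
  grind

theorem parentGraph_adj_parent {v : V} (hv : v ≠ r) (hpar : par v ≠ v) :
    (parentGraph r par).Adj v (par v) :=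
  parentGraph_adj.2 ⟨hpar.symm, .inl ⟨hv, rfl⟩⟩

theorem exists_eq_parent_of_parentGraph_adj {a b : V} (h : (parentGraph r par).Adj a b) :
    ∃ v ≠ r, s(a, b) = s(v, par v) := by
  obtain ⟨-, ⟨ha, rfl⟩ | ⟨hb, rfl⟩⟩ := parentGraph_adj.1 h
  exacts [⟨a, ha, rfl⟩, ⟨b, hb, Sym2.eq_swap⟩]

theorem isTree_parentGraph [Finite V] (rank : V → ℕ) (hrank : ∀ v ≠ r, rank (par v) < rank v) :
    (parentGraph r par).IsTree := by
  have hpar : ∀ v ≠ r, par v ≠ v := fun v hv h => (hrank v hv).ne (congrArg rank h)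
  have hreach : ∀ v, (parentGraph r par).Reachable v r := by
    intro v
    induction hv : rank v using Nat.strong_induction_on generalizing v with
    | _ n ih =>
      by_cases hvr : v = r
      · exact hvr ▸ .rfl
      · exact (parentGraph_adj_parent hvr (hpar v hvr)).reachable.trans
          (ih _ (hv ▸ hrank v hvr) _ rfl)
  have hinj : Set.InjOn (fun v => s(v, par v)) {r}ᶜ := by
    intro v hv w hw h
    by_contra hvw
    obtain ⟨hvw', hwv⟩ := (Sym2.eq_iff.1 h).resolve_left (fun h' => hvw h'.1)
    have hv' := hrank v hv
    have hw' := hrank w hw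
    rw [hwv] at hv'
    rw [← hvw'] at hw'
    omega
  have hedges : (parentGraph r par).edgeSet = (fun v => s(v, par v)) '' {r}ᶜ := by
    rw [parentGraph, SimpleGraph.edgeSet_fromEdgeSet, sdiff_eq_left, Set.disjoint_left]
    rintro _ ⟨v, hv, rfl⟩
    exact (hpar v hv).symm
  rw [SimpleGraph.isTree_iff_connected_and_card]
  refine ⟨(SimpleGraph.connected_iff_exists_forall_reachable _).2 ⟨r, fun v => (hreach v).symm⟩,
    ?_⟩
  rw [hedges, Nat.card_coe_set_eq, hinj.ncard_image, ← Set.ncard_univ,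
    ← Set.ncard_sdiff_singleton_add_one (Set.mem_univ r), Set.compl_eq_univ_sdiff]

end ParentGraph

section Brush

variable {V : Type*}

open scoped Classical in
noncomputable def brushParent (p q : V) (S : Set V) (v : V) : V :=
  if v ≠ p ∧ v ∈ S then p else q

/-- The `pq`-brush joining `p` to `q`, the other points of `S` to `p` and all remaining points
to `q`. -/
noncomputable def brush (p q : V) (S : Set V) : SimpleGraph V :=
  parentGraph q (brushParent p q S)

variable {p q : V} {S : Set V}

theorem brushParent_eq_or (v : V) :
    brushParent p q S v = p ∧ v ≠ p ∧ v ∈ S ∨ brushParent p q S v = q ∧ (v = p ∨ v ∉ S) := by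
  unfold brushParent
  split_ifs with h
  · exact .inl ⟨rfl, h⟩
  · exact .inr ⟨rfl, by tauto⟩

theorem isTree_brush [Finite V] (hpq : p ≠ q) : (brush p q S).IsTree := by
  classical
  refine isTree_parentGraph (fun v => if v = q then 0 else if v = p then 1 else 2) fun v hvq => ?_
  rcases brushParent_eq_or (p := p) (q := q) (S := S) v with ⟨h, hvp, -⟩ | ⟨h, -⟩ <;>
    rw [h] <;> split_ifs <;> simp_all

theorem brush_adj_left_right (hpq : p ≠ q) : (brush p q S).Adj p q := by
  have hp : brushParent p q S p = q := by simp [brushParent]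
  have h := parentGraph_adj_parent hpq (hp.trans_ne hpq.symm)
  rwa [hp] at h

theorem brush_adj_left_of_mem {v : V} (hv : v ∈ S) (hvp : v ≠ p) : (brush p q S).Adj p v := by
  by_cases hvq : v = q
  · exact hvq ▸ brush_adj_left_right (hvq ▸ hvp.symm)
  · have h : brushParent p q S v = p := if_pos ⟨hvp, hv⟩
    exact (h ▸ parentGraph_adj_parent hvq (h ▸ hvp.symm)).symm

theorem brush_adj_right_of_notMem {v : V} (hv : v ∉ S) (hvq : v ≠ q) :
    (brush p q S).Adj q v := by
  have h : brushParent p q S v = q := if_neg fun h => hv h.2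
  exact (h ▸ parentGraph_adj_parent hvq (h ▸ hvq.symm)).symm

theorem brush_adj_eq_or {a b : V} (h : (brush p q S).Adj a b) :
    a = p ∨ a = q ∨ b = p ∨ b = q := by
  obtain ⟨v, -, hab⟩ := exists_eq_parent_of_parentGraph_adj h
  rcases brushParent_eq_or (p := p) (q := q) (S := S) v with ⟨hv, -⟩ | ⟨hv, -⟩ <;>
    rw [hv] at hab <;> rcases Sym2.eq_iff.1 hab with ⟨-, rfl⟩ | ⟨rfl, -⟩ <;> simp

end Brush

theorem GenPos.nonCrossing_brush {P : Finset (ℝ × ℝ)} (hgen : GenPos P) {p q : P}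
    {H : Set (ℝ × ℝ)} (hH : Convex ℝ H) (hHc : Convex ℝ Hᶜ) (hp : (p : ℝ × ℝ) ∈ H)
    (hq : (q : ℝ × ℝ) ∉ H) : NonCrossing (brush p q {v | (v : ℝ × ℝ) ∈ H}) := by
  set par := brushParent p q {v : P | (v : ℝ × ℝ) ∈ H}
  have hpq : p ≠ q := fun h => hq (h ▸ hp)
  have different_parents : ∀ v w : P, w ≠ q → par v = p → par w = q →
      ¬ Cross (v : ℝ × ℝ) p w q := by
    intro v w hwq hv hw
    obtain ⟨-, hvp, hvH⟩ := (brushParent_eq_or v).resolve_right fun h => hpq (hv.symm.trans h.1)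
    obtain ⟨-, hwp | hwH⟩ := (brushParent_eq_or w).resolve_left fun h => hpq (h.1.symm.trans hw)
    · rw [hwp, cross_congr rfl Sym2.eq_swap]
      exact hgen.not_cross_of_right_eq p.2 v.2 q.2 (Subtype.coe_ne_coe.2 hvp.symm)
        (Subtype.coe_ne_coe.2 hpq) (Subtype.coe_ne_coe.2 fun h => hq (h ▸ hvH))
    · exact not_cross_of_disjoint_convex hH hHc disjoint_compl_right hvH hp hwH hq
  intro a b c d hab hcd hne
  obtain ⟨v, hvq, hab⟩ := exists_eq_parent_of_parentGraph_adj hab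
  obtain ⟨w, hwq, hcd⟩ := exists_eq_parent_of_parentGraph_adj hcd
  have hvw : v ≠ w := by rintro rfl; exact hne (hab.trans hcd.symm)
  rw [cross_congr hab hcd]
  have hinj := @Subtype.coe_injective _ (· ∈ P)
  rcases brushParent_eq_or v with ⟨hv, hvp, -⟩ | ⟨hv, -⟩ <;>
    rcases brushParent_eq_or w with ⟨hw, hwp, -⟩ | ⟨hw, -⟩ <;> rw [hv, hw]
  · exact hgen.not_cross_of_right_eq p.2 v.2 w.2 (hinj.ne hvp.symm) (hinj.ne hwp.symm) (hinj.ne hvw)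
  · exact different_parents v w hwq hv hw
  · exact fun h => different_parents w v hvq hw hv h.symm
  · exact hgen.not_cross_of_right_eq q.2 v.2 w.2 (hinj.ne hvq.symm) (hinj.ne hwq.symm) (hinj.ne hvw)

theorem stmt_13 (P : Finset (ℝ × ℝ)) (hgen : GenPos P)
    (p q x y : ℝ × ℝ) (hp : p ∈ P) (hq : q ∈ P) (hx : x ∈ P) (hy : y ∈ P)
    (hd : [p, q, x, y].Pairwise (· ≠ ·))
    (hnc : ¬ Cross p x q y) :
    ∃ T : SimpleGraph P, T.IsTree ∧ NonCrossing T ∧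
      T.Adj ⟨p, hp⟩ ⟨q, hq⟩ ∧ T.Adj ⟨p, hp⟩ ⟨x, hx⟩ ∧ T.Adj ⟨q, hq⟩ ⟨y, hy⟩ ∧
      ∀ a b : P, T.Adj a b → (a : ℝ × ℝ) = p ∨ (a : ℝ × ℝ) = q ∨
        (b : ℝ × ℝ) = p ∨ (b : ℝ × ℝ) = q := by
  obtain ⟨H, hH, hHc, hpxH, hqyH⟩ := exists_convex_convex_compl_separating (convex_segment p x)
    (isCompact_segment p x) (convex_segment q y) (isCompact_segment q y).isClosed
    (hgen.disjoint_segment hp hx hq hy hd hnc)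
  simp only [List.pairwise_cons, List.mem_cons, List.not_mem_nil, forall_eq_or_imp] at hd
  obtain ⟨⟨hpq, hpx, -⟩, ⟨-, hqy, -⟩, -⟩ := hd
  refine ⟨brush ⟨p, hp⟩ ⟨q, hq⟩ {v | (v : ℝ × ℝ) ∈ H}, isTree_brush (by simpa),
    hgen.nonCrossing_brush hH hHc (hpxH (left_mem_segment ℝ p x))
      (hqyH (left_mem_segment ℝ q y)),
    brush_adj_left_right (by simpa), brush_adj_left_of_mem (hpxH (right_mem_segment ℝ p x))
      (by simpa using hpx.symm), brush_adj_right_of_notMem (hqyH (right_mem_segment ℝ q y))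
      (by simpa using hqy.symm), fun a b hab => ?_⟩
  simpa only [Subtype.ext_iff] using brush_adj_eq_or hab
end
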